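/- arXiv:1701.06550 — 6 statements merged into one kernel-verified Lean document; each statement's English description precedes it below -/
import Mathlib

section
/- Let K ⊂ ℝⁿ be a closed convex set containing the origin in its interior. If C ⊂ ℝⁿ is a bounded closed convex set such that K = C*, then K̂ ⊆ C, where K̂ = {y ∈ K* : ∃ x ∈ K, ⟨x, y⟩ = 1}. -/
open RealInnerProductSpace

variable {n : ℕ}

/-- The polar of a set `K`. -/
def polar (K : Set (EuclideanSpace ℝ (Fin n))) : Set (EuclideanSpace ℝ (Fin n)) :=
  {y | ∀ x ∈ K, ⟪x, y⟫ ≤ 1}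

/-- The set `K̂` of points of the polar attaining value 1 on `K`. -/
def hatK (K : Set (EuclideanSpace ℝ (Fin n))) : Set (EuclideanSpace ℝ (Fin n)) :=
  {y ∈ polar K | ∃ x ∈ K, ⟪x, y⟫ = 1}

/-- A function is sublinear if it is convex and positively homogeneous. -/
def IsSublinear (σ : EuclideanSpace ℝ (Fin n) → ℝ) : Prop :=
  ConvexOn ℝ Set.univ σ ∧ ∀ t : ℝ, 0 < t → ∀ x, σ (t • x) = t * σ x

/-- The recession cone of `K`. -/
def recCone (K : Set (EuclideanSpace ℝ (Fin n))) : Set (EuclideanSpace ℝ (Fin n)) :=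
  {x ∈ K | ∀ t : ℝ, 0 < t → t • x ∈ K}

/-- The support function of a set `T`, as `x ↦ sup_{y ∈ T} ⟪x, y⟫`. -/
noncomputable def suppFn (T : Set (EuclideanSpace ℝ (Fin n)))
    (x : EuclideanSpace ℝ (Fin n)) : ℝ :=
  sSup ((fun y => ⟪x, y⟫) '' T)

/-!
Separate a point `y ∉ C` from `C` by a hyperplane `⟪v, ·⟫ = u`. If `x ∈ C*` pairs with `y` to `1`,
a positive combination `a • x + b • v` with `a + b u = 1` still lies in `C*` but pairs with `y` to
more than `1`, so `y ∉ (C*)*`.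
-/

theorem Convex.exists_inner_lt_of_notMem {E : Type*} [NormedAddCommGroup E]
    [InnerProductSpace ℝ E] [CompleteSpace E] {C : Set E} {y : E}
    (hconv : Convex ℝ C) (hcl : IsClosed C) (hy : y ∉ C) :
    ∃ (v : E) (u : ℝ), (∀ c ∈ C, ⟪v, c⟫ < u) ∧ u < ⟪v, y⟫ := by
  obtain ⟨f, u, hC, hy⟩ := geometric_hahn_banach_closed_point hconv hcl hy
  refine ⟨(InnerProductSpace.toDual ℝ E).symm f, u, fun c hc => ?_, ?_⟩
  · simpa only [InnerProductSpace.toDual_symm_apply] using hC c hc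
  · simpa only [InnerProductSpace.toDual_symm_apply] using hy

lemma exists_pos_add_mul_eq_one (u : ℝ) : ∃ a b : ℝ, 0 < a ∧ 0 < b ∧ a + b * u = 1 := by
  have h : 0 < 1 + |u| := by positivity
  refine ⟨(1 + |u| - u) / (1 + |u|), 1 / (1 + |u|), ?_, by positivity, ?_⟩
  · exact div_pos (by linarith [le_abs_self u]) h
  · field_simp; ring

theorem exists_mem_polar_one_lt_inner {C : Set (EuclideanSpace ℝ (Fin n))}
    {x y : EuclideanSpace ℝ (Fin n)} (hcl : IsClosed C) (hconv : Convex ℝ C)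
    (hx : x ∈ polar C) (hxy : ⟪x, y⟫ = 1) (hy : y ∉ C) :
    ∃ w ∈ polar C, 1 < ⟪w, y⟫ := by
  obtain ⟨v, u, hvC, hvy⟩ := hconv.exists_inner_lt_of_notMem hcl hy
  obtain ⟨a, b, ha, hb, hab⟩ := exists_pos_add_mul_eq_one u
  refine ⟨a • x + b • v, fun c hc => ?_, ?_⟩
  · have hxc : a * ⟪c, x⟫ ≤ a := mul_le_of_le_one_right ha.le (hx c hc)
    have hvc : b * ⟪v, c⟫ < b * u := mul_lt_mul_of_pos_left (hvC c hc) hb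
    rw [inner_add_right, real_inner_smul_right, real_inner_smul_right, real_inner_comm v]
    linarith
  · have := mul_lt_mul_of_pos_left hvy hb
    rw [inner_add_left, real_inner_smul_left, real_inner_smul_left, hxy]
    linarith

theorem hatK_polar_subset {C : Set (EuclideanSpace ℝ (Fin n))} (hcl : IsClosed C)
    (hconv : Convex ℝ C) : hatK (polar C) ⊆ C := by
  rintro y ⟨hy, x, hx, hxy⟩
  by_contra hyC
  obtain ⟨w, hw, hwy⟩ := exists_mem_polar_one_lt_inner hcl hconv hx hxy hyC
  exact (hy w hw).not_gt hwy

theorem stmt1_general (K C : Set (EuclideanSpace ℝ (Fin n)))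
    (hCcl : IsClosed C) (hCconv : Convex ℝ C)
    (hKC : K = polar C) :
    hatK K ⊆ C := by
  subst hKC
  exact hatK_polar_subset hCcl hCconv

theorem stmt1 (K C : Set (EuclideanSpace ℝ (Fin n)))
    (hKcl : IsClosed K) (hKconv : Convex ℝ K) (h0 : (0 : EuclideanSpace ℝ (Fin n)) ∈ interior K)
    (hCb : Bornology.IsBounded C) (hCcl : IsClosed C) (hCconv : Convex ℝ C)
    (hKC : K = polar C) :
    hatK K ⊆ C :=
  stmt1_general K C hCcl hCconv hKC
end

section
/- Let K ⊂ ℝⁿ be a closed convex set containing the origin in its interior and let σ be a sublinear function with K = {x : σ(x) ≤ 1}. Then for every x not in the recession cone of K, σ(x) = sup_{y ∈ K̂} ⟨x,y⟩ = sup_{y ∈ K*} ⟨x,y⟩. -/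
/-!
Positive homogeneity makes `σ` the gauge of `K`: if `x` is not in the recession cone then
`σ x > 0`, and `z = x / σ x` lies on the boundary of `K`. A supporting hyperplane of `K` at `z`
gives `y ∈ K̂` with `⟪z, y⟫ = 1`, so `⟪x, y⟫ = σ x`, while every `y' ∈ K*` has
`⟪x, y'⟫ = σ x ⟪z, y'⟫ ≤ σ x`.
-/

open RealInnerProductSpace

variable {n : ℕ}

open Filter Topology

theorem notMem_interior_of_posHomogeneous_eq_one {E : Type*} [AddCommGroup E] [Module ℝ E]
    [TopologicalSpace E] [ContinuousSMul ℝ E] {σ : E → ℝ}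
    (hσ : ∀ t : ℝ, 0 < t → ∀ x, σ (t • x) = t * σ x) {z : E} (hz : σ z = 1) :
    z ∉ interior {x | σ x ≤ 1} := by
  intro hzi
  have hlim : Tendsto (fun t : ℝ => t • z) (𝓝[>] 1) (𝓝 z) := by
    simpa using (tendsto_nhdsWithin_of_tendsto_nhds (tendsto_id (x := 𝓝 (1 : ℝ)))).smul_const z
  obtain ⟨t, htK, ht⟩ :=
    ((hlim.eventually_mem (isOpen_interior.mem_nhds hzi)).and self_mem_nhdsWithin).exists
  have : σ (t • z) ≤ 1 := (interior_subset htK :)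
  rw [hσ t (zero_lt_one.trans ht), hz, mul_one] at this
  exact (not_le.2 ht) this

theorem Convex.exists_forall_le_one_of_notMem_interior {E : Type*} [AddCommGroup E]
    [Module ℝ E] [TopologicalSpace E] [IsTopologicalAddGroup E] [ContinuousSMul ℝ E]
    {K : Set E} (hK : Convex ℝ K) (h0 : (0 : E) ∈ interior K) {z : E} (hz : z ∉ interior K) :
    ∃ f : StrongDual ℝ E, (∀ a ∈ K, f a ≤ 1) ∧ f z = 1 := by
  obtain ⟨f, hfz, hf⟩ := separate_convex_open_set h0 hK.interior isOpen_interior hz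
  refine ⟨f, fun a ha => ?_, hfz⟩
  have hcl : closure (interior K) ⊆ {a | f a ≤ 1} :=
    (isClosed_le f.continuous continuous_const).closure_subset_iff.2 fun b hb => (hf b hb).le
  rw [hK.closure_interior_eq_closure_of_nonempty_interior ⟨0, h0⟩] at hcl
  exact hcl (subset_closure ha)

theorem pos_of_notMem_recCone {σ : EuclideanSpace ℝ (Fin n) → ℝ}
    (hσ : ∀ t : ℝ, 0 < t → ∀ x, σ (t • x) = t * σ x) {x : EuclideanSpace ℝ (Fin n)}
    (hx : x ∉ recCone {x | σ x ≤ 1}) : 0 < σ x := by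
  by_contra! hle
  refine hx ⟨hle.trans zero_le_one, fun t ht => ?_⟩
  show σ (t • x) ≤ 1
  rw [hσ t ht]
  nlinarith

theorem exists_mem_polar_inner_eq_one {K : Set (EuclideanSpace ℝ (Fin n))} (hK : Convex ℝ K)
    (h0 : (0 : EuclideanSpace ℝ (Fin n)) ∈ interior K) {z : EuclideanSpace ℝ (Fin n)}
    (hz : z ∉ interior K) : ∃ y ∈ polar K, ⟪z, y⟫ = 1 := by
  obtain ⟨f, hfK, hfz⟩ := hK.exists_forall_le_one_of_notMem_interior h0 hz
  have hf : ∀ w, ⟪w, (InnerProductSpace.toDual ℝ _).symm f⟫ = f w := fun w => by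
    rw [real_inner_comm, InnerProductSpace.toDual_symm_apply]
  exact ⟨_, fun a ha => (hf a).trans_le (hfK a ha), (hf z).trans hfz⟩

theorem suppFn_eq_of_inner_eq_one {K T : Set (EuclideanSpace ℝ (Fin n))}
    (hT : T ⊆ polar K) {y z : EuclideanSpace ℝ (Fin n)} (hy : y ∈ T) (hz : z ∈ K)
    (hzy : ⟪z, y⟫ = 1) {c : ℝ} (hc : 0 ≤ c) {x : EuclideanSpace ℝ (Fin n)} (hx : c • z = x) :
    suppFn T x = c := by
  subst hx
  refine IsGreatest.csSup_eq ⟨⟨y, hy, by simp [real_inner_smul_left, hzy]⟩, ?_⟩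
  rintro _ ⟨y', hy', rfl⟩
  simpa [real_inner_smul_left] using mul_le_of_le_one_right hc (hT hy' z hz)

theorem stmt2_general (K : Set (EuclideanSpace ℝ (Fin n)))
    (hKconv : Convex ℝ K) (h0 : (0 : EuclideanSpace ℝ (Fin n)) ∈ interior K)
    (σ : EuclideanSpace ℝ (Fin n) → ℝ) (hσ : IsSublinear σ)
    (hKσ : K = {x | σ x ≤ 1}) :
    ∀ x ∉ recCone K, σ x = suppFn (hatK K) x ∧ σ x = suppFn (polar K) x := by
  subst hKσ
  intro x hx
  have hpos : 0 < σ x := pos_of_notMem_recCone hσ.2 hx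
  set z := (σ x)⁻¹ • x
  have hσz : σ z = 1 := by rw [hσ.2 _ (inv_pos.2 hpos), inv_mul_cancel₀ hpos.ne']
  have hzK : z ∈ {x | σ x ≤ 1} := hσz.le
  obtain ⟨y, hyK, hzy⟩ := exists_mem_polar_inner_eq_one hKconv h0
    (notMem_interior_of_posHomogeneous_eq_one hσ.2 hσz)
  have hyhat : y ∈ hatK {x | σ x ≤ 1} := ⟨hyK, z, hzK, hzy⟩
  have hxz : σ x • z = x := by rw [smul_smul, mul_inv_cancel₀ hpos.ne', one_smul]
  exact ⟨(suppFn_eq_of_inner_eq_one (fun _ h => h.1) hyhat hzK hzy hpos.le hxz).symm,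
    (suppFn_eq_of_inner_eq_one subset_rfl hyK hzK hzy hpos.le hxz).symm⟩

theorem stmt2 (K : Set (EuclideanSpace ℝ (Fin n)))
    (hKcl : IsClosed K) (hKconv : Convex ℝ K) (h0 : (0 : EuclideanSpace ℝ (Fin n)) ∈ interior K)
    (σ : EuclideanSpace ℝ (Fin n) → ℝ) (hσ : IsSublinear σ)
    (hKσ : K = {x | σ x ≤ 1}) :
    ∀ x ∉ recCone K, σ x = suppFn (hatK K) x ∧ σ x = suppFn (polar K) x :=
  stmt2_general K hKconv h0 σ hσ hKσ
end

section
/- Let K ⊂ ℝⁿ be a closed convex set containing the origin in its interior. If ȳ is an exposed point of K* different from the origin, then there exists x ∈ K such that ⟨x, ȳ⟩ = 1 and ⟨x, y⟩ < 1 for all y ∈ K* with y ≠ ȳ. In particular ȳ ∈ K̂. -/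
open RealInnerProductSpace

variable {n : ℕ}

/-- Bipolar membership: if `⟪x, y⟫ ≤ 1` for all `y` in the polar, then `x ∈ K`. -/
lemma mem_of_forall_polar (K : Set (EuclideanSpace ℝ (Fin n))) (hKcl : IsClosed K)
    (hKconv : Convex ℝ K) (h0 : (0 : EuclideanSpace ℝ (Fin n)) ∈ K)
    (x : EuclideanSpace ℝ (Fin n)) (hx : ∀ y ∈ polar K, ⟪x, y⟫ ≤ 1) : x ∈ K := by
  by_contra hxK
  obtain ⟨f, u, hfs, hfx⟩ := geometric_hahn_banach_closed_point hKconv hKcl hxK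
  set v := (InnerProductSpace.toDual ℝ (EuclideanSpace ℝ (Fin n))).symm f with hv
  have hfv : ∀ z, ⟪v, z⟫ = f z := fun z => InnerProductSpace.toDual_symm_apply
  have hu0 : 0 < u := by simpa using hfs 0 h0
  have hfx0 : 0 < f x := hu0.trans hfx
  set t := max u (f x / 2) with ht
  have ht0 : 0 < t := lt_max_of_lt_left hu0
  have htx : t < f x := max_lt hfx (by linarith)
  have hyp : t⁻¹ • v ∈ polar K := by
    intro k hk
    have : ⟪k, t⁻¹ • v⟫ = t⁻¹ * f k := by
      rw [real_inner_smul_right, real_inner_comm, hfv]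
    rw [this]
    have hfk : f k ≤ t := (hfs k hk).le.trans (le_max_left _ _)
    calc t⁻¹ * f k ≤ t⁻¹ * t := by
          exact mul_le_mul_of_nonneg_left hfk (inv_nonneg.2 ht0.le)
      _ = 1 := inv_mul_cancel₀ ht0.ne'
  have h1 := hx _ hyp
  have : ⟪x, t⁻¹ • v⟫ = t⁻¹ * f x := by
    rw [real_inner_smul_right, real_inner_comm, hfv]
  rw [this] at h1
  have : f x ≤ t := by
    have := mul_le_mul_of_nonneg_left h1 ht0.le
    rwa [mul_one, ← mul_assoc, mul_inv_cancel₀ ht0.ne', one_mul] at this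
  linarith

theorem stmt4 (K : Set (EuclideanSpace ℝ (Fin n)))
    (hKcl : IsClosed K) (hKconv : Convex ℝ K) (h0 : (0 : EuclideanSpace ℝ (Fin n)) ∈ interior K)
    (ybar : EuclideanSpace ℝ (Fin n)) (hy : ybar ∈ Set.exposedPoints ℝ (polar K))
    (hy0 : ybar ≠ 0) :
    (∃ x ∈ K, ⟪x, ybar⟫ = 1 ∧ ∀ y ∈ polar K, y ≠ ybar → ⟪x, y⟫ < 1) ∧
      ybar ∈ hatK K := by
  have h0K : (0 : EuclideanSpace ℝ (Fin n)) ∈ K := interior_subset h0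
  obtain ⟨hybar, l, hl⟩ := exposed_point_def.1 hy
  have h0pol : (0 : EuclideanSpace ℝ (Fin n)) ∈ polar K := by
    intro k _; simp
  -- l ybar > 0
  have hl0 : 0 < l ybar := by
    rcases lt_or_eq_of_le (by simpa using (hl 0 h0pol).1) with h | h
    · exact h
    · exact absurd ((hl 0 h0pol).2 (by simp [← h])).symm hy0
  set v := (InnerProductSpace.toDual ℝ (EuclideanSpace ℝ (Fin n))).symm l with hv
  have hfv : ∀ z, ⟪v, z⟫ = l z := fun z => InnerProductSpace.toDual_symm_apply
  set x := (l ybar)⁻¹ • v with hx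
  have hxy : ∀ y, ⟪x, y⟫ = (l ybar)⁻¹ * l y := by
    intro y; rw [hx, real_inner_smul_left, hfv]
  have hx1 : ⟪x, ybar⟫ = 1 := by
    rw [hxy, inv_mul_cancel₀ hl0.ne']
  have hxlt : ∀ y ∈ polar K, y ≠ ybar → ⟪x, y⟫ < 1 := by
    intro y hyp hne
    have hly : l y < l ybar := by
      rcases lt_or_eq_of_le (hl y hyp).1 with h | h
      · exact h
      · exact absurd ((hl y hyp).2 h.ge) hne
    rw [hxy]
    calc (l ybar)⁻¹ * l y < (l ybar)⁻¹ * l ybar :=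
          mul_lt_mul_of_pos_left hly (inv_pos.2 hl0)
      _ = 1 := inv_mul_cancel₀ hl0.ne'
  have hxK : x ∈ K := by
    apply mem_of_forall_polar K hKcl hKconv h0K
    intro y hyp
    by_cases hne : y = ybar
    · rw [hne, hx1]
    · exact (hxlt y hyp hne).le
  exact ⟨⟨x, hxK, hx1, hxlt⟩, hybar, x, hxK, hx1⟩
end

section
/- Let K ⊂ ℝⁿ be a closed convex set containing the origin in its interior. Then for every x ∈ ℝⁿ, sup_{y ∈ K̂} ⟨x,y⟩ = sup_{y ∈ K̂ ∩ exp(K*)} ⟨x,y⟩, where exp(K*) denotes the set of exposed points of K*. -/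
open RealInnerProductSpace

variable {n : ℕ}

/-!
Every point of `K̂` is approximated, in the direction `x`, by nonzero exposed points of the
compact set `K*`: the point of `K*` farthest from `-R (x + s x₀)`, where `x₀ ∈ K` is a witness
for `y ∈ K̂`, is exposed, nonzero once `s` is large, and maximizes `⟪x, ·⟫` up to an error of
order `1 / R`. A nonzero exposed point of `K*` lies in `K̂`, because its exposing vector, rescaled,
lies in the bipolar `K** = K`.
-/

section FarthestPoint

variable {F : Type*} [NormedAddCommGroup F] [InnerProductSpace ℝ F]

lemma mem_exposedPoints_of_forall_norm_sub_le {C : Set F} {q z : F} (hz : z ∈ C)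
    (hmax : ∀ y ∈ C, ‖y - q‖ ≤ ‖z - q‖) : z ∈ C.exposedPoints ℝ := by
  refine ⟨hz, innerSL ℝ (z - q), fun y hy => ?_⟩
  simp only [innerSL_apply_apply]
  have hyq := hmax y hy
  have hcs : ⟪z - q, y - q⟫ ≤ ‖z - q‖ ^ 2 := by
    nlinarith [real_inner_le_norm (z - q) (y - q), norm_nonneg (z - q)]
  have hself : ⟪z - q, z - q⟫ = ‖z - q‖ ^ 2 := real_inner_self_eq_norm_sq _
  have hdist : ‖y - z‖ ^ 2 = ‖y - q‖ ^ 2 - 2 * ⟪z - q, y - q⟫ + ‖z - q‖ ^ 2 := by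
    rw [← sub_sub_sub_cancel_right y z q, norm_sub_sq_real, real_inner_comm]
  rw [inner_sub_right] at hcs hself hdist
  refine ⟨by linarith, fun hle => ?_⟩
  have hyz : ‖y - z‖ ^ 2 ≤ 0 := by nlinarith [norm_nonneg (y - q)]
  exact sub_eq_zero.mp (norm_eq_zero.mp (by nlinarith [norm_nonneg (y - z)]))

lemma IsCompact.exists_mem_exposedPoints_forall_inner_add_norm_sq_le {C : Set F}
    (hC : IsCompact C) (hne : C.Nonempty) (u : F) :
    ∃ z ∈ C.exposedPoints ℝ, ∀ y ∈ C, 2 * ⟪u, y⟫ + ‖y‖ ^ 2 ≤ 2 * ⟪u, z⟫ + ‖z‖ ^ 2 := by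
  obtain ⟨z, hzC, hzmax⟩ :=
    hC.exists_isMaxOn hne (f := fun y => ‖y - -u‖) (Continuous.continuousOn (by fun_prop))
  refine ⟨z, mem_exposedPoints_of_forall_norm_sub_le hzC fun y hy => hzmax hy, fun y hy => ?_⟩
  have hsq : ‖y + u‖ ^ 2 ≤ ‖z + u‖ ^ 2 := by
    simpa only [sub_neg_eq_add] using pow_le_pow_left₀ (norm_nonneg _) (hzmax hy) 2
  rw [norm_add_sq_real, norm_add_sq_real, real_inner_comm u y, real_inner_comm u z] at hsq
  linarith

end FarthestPoint

lemma sSup_image_eq_of_subset_of_forall_exists_lt_add {α : Type*} {f : α → ℝ} {A B : Set α}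
    (hBA : B ⊆ A) (hbdd : BddAbove (f '' A))
    (happrox : ∀ a ∈ A, ∀ ε > 0, ∃ b ∈ B, f a < f b + ε) :
    sSup (f '' A) = sSup (f '' B) := by
  rcases A.eq_empty_or_nonempty with rfl | ⟨a₀, ha₀⟩
  · rw [Set.subset_empty_iff.mp hBA]
  have hBne : (f '' B).Nonempty := by
    obtain ⟨b, hb, -⟩ := happrox a₀ ha₀ 1 one_pos
    exact ⟨f b, b, hb, rfl⟩
  have hbddB : BddAbove (f '' B) := hbdd.mono (Set.image_mono hBA)
  refine le_antisymm (csSup_le ⟨f a₀, a₀, ha₀, rfl⟩ ?_) (csSup_le_csSup hbdd hBne (Set.image_mono hBA))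
  rintro _ ⟨a, ha, rfl⟩
  refine le_of_forall_pos_le_add fun ε hε => ?_
  obtain ⟨b, hb, hlt⟩ := happrox a ha ε hε
  linarith [le_csSup hbddB ⟨b, hb, rfl⟩]

section Polar

local notation "E" => EuclideanSpace ℝ (Fin n)

lemma zero_mem_polar (K : Set E) : (0 : E) ∈ polar K :=
  fun x _ => by simp

lemma isClosed_polar (K : Set E) : IsClosed (polar K) := by
  have : polar K = ⋂ x ∈ K, {y : E | ⟪x, y⟫ ≤ 1} := by
    ext y
    simp [polar]
  rw [this]
  exact isClosed_biInter fun x _ => isClosed_le (by fun_prop) continuous_const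

lemma isCompact_polar {K : Set E} (h0 : (0 : E) ∈ interior K) : IsCompact (polar K) := by
  obtain ⟨ε, hε, hball⟩ := Metric.mem_nhds_iff.mp (mem_interior_iff_mem_nhds.mp h0)
  refine Metric.isCompact_of_isClosed_isBounded (isClosed_polar K)
    (isBounded_iff_forall_norm_le.mpr ⟨2 / ε, fun y hy => ?_⟩)
  rcases eq_or_ne y 0 with rfl | hy0
  · rw [norm_zero]
    positivity
  have hyn : 0 < ‖y‖ := norm_pos_iff.mpr hy0
  have hxK : (ε / 2 / ‖y‖) • y ∈ K := by
    apply hball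
    rw [mem_ball_zero_iff, norm_smul, Real.norm_of_nonneg (by positivity), div_mul_cancel₀ _ hyn.ne']
    linarith
  have h1 := hy _ hxK
  rw [real_inner_smul_left, real_inner_self_eq_norm_sq] at h1
  rw [le_div_iff₀ hε]
  have : ε / 2 / ‖y‖ * ‖y‖ ^ 2 = ε / 2 * ‖y‖ := by field_simp
  linarith

lemma polar_polar_subset {K : Set E} (hKcl : IsClosed K) (hKconv : Convex ℝ K) (h0K : (0 : E) ∈ K) :
    polar (polar K) ⊆ K := by
  intro w hw
  by_contra hwK
  obtain ⟨g, s, hgK, hgw⟩ := geometric_hahn_banach_closed_point hKconv hKcl hwK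
  have hs : 0 < s := by simpa using hgK 0 h0K
  set u := (InnerProductSpace.toDual ℝ E).symm g
  have hu : ∀ v, ⟪u, v⟫ = g v := fun v => InnerProductSpace.toDual_symm_apply
  have huK : s⁻¹ • u ∈ polar K := by
    intro a ha
    rw [real_inner_smul_right, real_inner_comm, hu, inv_mul_le_iff₀ hs, mul_one]
    exact (hgK a ha).le
  have h1 := hw _ huK
  rw [real_inner_smul_left, hu, inv_mul_le_iff₀ hs, mul_one] at h1
  linarith

lemma mem_hatK_of_mem_exposedPoints_polar {K : Set E} (hKcl : IsClosed K) (hKconv : Convex ℝ K)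
    (h0K : (0 : E) ∈ K) {z : E} (hz : z ∈ (polar K).exposedPoints ℝ) (hz0 : z ≠ 0) :
    z ∈ hatK K := by
  obtain ⟨hzP, l, hl⟩ := hz
  -- `0 ∈ K*` cannot lie in the exposing hyperplane of `z ≠ 0`
  have hlz : 0 < l z := by
    by_contra! h
    exact hz0 ((hl 0 (zero_mem_polar K)).2 (by simpa using h)).symm
  set v := (InnerProductSpace.toDual ℝ E).symm l
  have hv : ∀ w, ⟪v, w⟫ = l w := fun w => InnerProductSpace.toDual_symm_apply
  refine ⟨hzP, (l z)⁻¹ • v, polar_polar_subset hKcl hKconv h0K fun y hy => ?_, ?_⟩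
  · rw [real_inner_smul_right, real_inner_comm, hv, inv_mul_le_iff₀ hlz, mul_one]
    exact (hl y hy).1
  · rw [real_inner_smul_left, hv, inv_mul_cancel₀ hlz.ne']

lemma exists_mem_hatK_inter_exposedPoints_inner_lt_add {K : Set E} (hKcl : IsClosed K)
    (hKconv : Convex ℝ K) (h0 : (0 : E) ∈ interior K) (x : E) {y : E} (hy : y ∈ hatK K)
    {ε : ℝ} (hε : 0 < ε) :
    ∃ z ∈ hatK K ∩ (polar K).exposedPoints ℝ, ⟪x, y⟫ < ⟪x, z⟫ + ε := by
  obtain ⟨hyP, x₀, hx₀K, hx₀y⟩ := hy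
  have hP := isCompact_polar h0
  obtain ⟨M, hM⟩ := isBounded_iff_forall_norm_le.mp hP.isBounded
  set s := |⟪x, y⟫| + 1
  set R := (M ^ 2 + 1) / ε
  have hR : 0 < R := by positivity
  have hRε : R * ε = M ^ 2 + 1 := div_mul_cancel₀ _ hε.ne'
  obtain ⟨z, hz, hzmax⟩ :=
    hP.exists_mem_exposedPoints_forall_inner_add_norm_sq_le ⟨y, hyP⟩ (R • (x + s • x₀))
  have hmax := hzmax y hyP
  simp only [real_inner_smul_left, inner_add_left, hx₀y] at hmax
  have hx₀z : ⟪x₀, z⟫ ≤ 1 := hz.1 x₀ hx₀K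
  have hzM : ‖z‖ ^ 2 ≤ M ^ 2 := pow_le_pow_left₀ (norm_nonneg z) (hM z hz.1) 2
  have hxys : 0 < ⟪x, y⟫ + s := by linarith [neg_abs_le ⟪x, y⟫]
  have hz0 : z ≠ 0 := by
    rintro rfl
    simp only [inner_zero_right, mul_zero, add_zero, norm_zero] at hmax
    nlinarith [sq_nonneg ‖y‖]
  refine ⟨z, ⟨mem_hatK_of_mem_exposedPoints_polar hKcl hKconv (interior_subset h0) hz hz0, hz⟩, ?_⟩
  have hs : 0 ≤ s * (1 - ⟪x₀, z⟫) := mul_nonneg (by positivity) (by linarith)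
  have : R * ⟪x, y⟫ < R * (⟪x, z⟫ + ε) := by nlinarith [sq_nonneg ‖y‖]
  exact lt_of_mul_lt_mul_left this hR.le

end Polar

theorem stmt5 (K : Set (EuclideanSpace ℝ (Fin n)))
    (hKcl : IsClosed K) (hKconv : Convex ℝ K) (h0 : (0 : EuclideanSpace ℝ (Fin n)) ∈ interior K) :
    ∀ x, suppFn (hatK K) x = suppFn (hatK K ∩ Set.exposedPoints ℝ (polar K)) x := by
  intro x
  have hbdd : BddAbove ((fun y => ⟪x, y⟫) '' hatK K) :=
    (((isCompact_polar h0).image (by fun_prop)).bddAbove).mono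
      (Set.image_mono fun _ hy => hy.1)
  exact sSup_image_eq_of_subset_of_forall_exists_lt_add Set.inter_subset_left hbdd
    fun y hy ε hε => exists_mem_hatK_inter_exposedPoints_inner_lt_add hKcl hKconv h0 x hy hε
end

section
/- (Straszewicz) For a closed convex set C ⊆ ℝⁿ, the set of exposed points of C is dense in the set of extreme points of C. -/
/-!
Let `x` be an extreme point of `C` and `ε > 0`. The set `K = C ∩ closedBall x ε` is compact and
convex, and since `x` is extreme it lies outside the compact convex hull of the part `S` of `K` on
the sphere `‖· - x‖ = ε`. Separating `x` from that hull by a hyperplane and moving far away from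
`x` in the normal direction gives a centre `z` which is strictly closer to every point of the
hull than to `x`. A point `f` of `K` farthest from `z` is then an exposed point of `K` (the sphere
around `z` through `f` supports `K` at `f` alone) and is not in `S`, i.e. lies in the open ball;
exposedness being a local property of convex sets, `f` is exposed in `C`.
-/

open RealInnerProductSpace

variable {n : ℕ}

open Set Metric Filter Topology Module Function

section Caratheodory

variable {E : Type*}

theorem convexHull_eq_image_stdSimplex_prod_pi [AddCommGroup E] [Module ℝ E]
    [FiniteDimensional ℝ E] (s : Set E) :
    convexHull ℝ s =
      (fun p : (Fin (finrank ℝ E + 1) → ℝ) × (Fin (finrank ℝ E + 1) → E) => ∑ i, p.1 i • p.2 i) ''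
        (stdSimplex ℝ (Fin (finrank ℝ E + 1)) ×ˢ univ.pi fun _ => s) := by
  refine subset_antisymm (fun x hx => ?_) ?_
  · obtain ⟨x₀, hx₀⟩ := convexHull_nonempty_iff.1 ⟨x, hx⟩
    obtain ⟨ι, _, z, w, hzs, hz, hw, hw1, rfl⟩ := eq_pos_convex_span_of_mem_convexHull hx
    obtain ⟨e⟩ : Nonempty (ι ↪ Fin (finrank ℝ E + 1)) := by
      rw [Embedding.nonempty_iff_card_le, Fintype.card_fin]
      exact hz.card_le_finrank_succ.trans (Nat.succ_le_succ (Submodule.finrank_le _))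
    have hw' : 0 ≤ extend e w 0 := extend_nonneg (fun i => (hw i).le) le_rfl
    have hw₀ : ∀ j ∉ range e, extend e w 0 j = 0 := fun j hj => extend_apply' _ _ _ hj
    refine ⟨(extend e w 0, extend e z fun _ => x₀),
      ⟨⟨hw', ?_⟩, fun j _ => ?_⟩, ?_⟩
    · rw [← hw1]
      exact (Fintype.sum_of_injective e e.injective w _ hw₀
        fun i => (e.injective.extend_apply w 0 i).symm).symm
    · by_cases hj : ∃ i, e i = j
      · obtain ⟨i, rfl⟩ := hj
        simpa [e.injective.extend_apply] using hzs (mem_range_self i)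
      · simpa [extend_apply' _ _ _ hj] using hx₀
    · refine (Fintype.sum_of_injective e e.injective _ _ (fun j hj => ?_) fun i => ?_).symm
      · simp [hw₀ j hj]
      · simp [e.injective.extend_apply]
  · rintro _ ⟨⟨w, z⟩, ⟨⟨hw0, hw1⟩, hz⟩, rfl⟩
    exact (convex_convexHull ℝ s).sum_mem (fun i _ => hw0 i) hw1
      fun i _ => subset_convexHull ℝ s (hz i trivial)

theorem IsCompact.convexHull [NormedAddCommGroup E] [NormedSpace ℝ E] [FiniteDimensional ℝ E]
    {s : Set E} (hs : IsCompact s) : IsCompact (convexHull ℝ s) := by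
  rw [convexHull_eq_image_stdSimplex_prod_pi]
  exact ((isCompact_stdSimplex _ _).prod (isCompact_univ_pi fun _ => hs)).image
    (by fun_prop)

end Caratheodory

theorem mem_exposedPoints_of_mem_exposedPoints_inter {E : Type*} [AddCommGroup E] [Module ℝ E]
    [TopologicalSpace E] [IsTopologicalAddGroup E] [ContinuousSMul ℝ E] {C U : Set E} {x : E}
    (hC : Convex ℝ C) (hU : U ∈ 𝓝 x) (hx : x ∈ (C ∩ U).exposedPoints ℝ) :
    x ∈ C.exposedPoints ℝ := by
  obtain ⟨⟨hxC, -⟩, l, hl⟩ := hx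
  refine ⟨hxC, l, fun y hy => ?_⟩
  have hseg : Tendsto (fun t : ℝ => x + t • (y - x)) (𝓝[>] 0) (𝓝 x) := by
    have : Continuous fun t : ℝ => x + t • (y - x) := by fun_prop
    simpa using (this.tendsto 0).mono_left nhdsWithin_le_nhds
  obtain ⟨t, htU, ht0, ht1⟩ := ((hseg.eventually hU).and (Ioc_mem_nhdsGT one_pos)).exists
  obtain ⟨hle, heq⟩ := hl _ ⟨hC.add_smul_sub_mem hxC hy ⟨ht0.le, ht1⟩, htU⟩
  have hlw : l (x + t • (y - x)) = l x + t * (l y - l x) := by simp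
  rw [hlw] at hle heq
  refine ⟨by nlinarith, fun hxy => ?_⟩
  have : t • (y - x) = 0 := by simpa using heq (by nlinarith)
  simpa [ht0.ne', sub_eq_zero] using this

section InnerProductSpace

variable {E : Type*} [NormedAddCommGroup E] [InnerProductSpace ℝ E]

theorem mem_exposedPoints_of_isMaxOn_dist {A : Set E} {x z : E} (hx : x ∈ A)
    (hmax : IsMaxOn (dist · z) A x) : x ∈ A.exposedPoints ℝ := by
  refine ⟨hx, innerSL ℝ (x - z), fun y hy => ?_⟩
  have hyz : ‖y - z‖ ≤ ‖x - z‖ := by simpa [dist_eq_norm] using hmax hy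
  have key : ‖y - x‖ ^ 2 + 2 * ⟪x - z, y - x⟫ ≤ 0 := by
    have h := norm_add_sq_real (y - x) (x - z)
    rw [sub_add_sub_cancel, real_inner_comm] at h
    nlinarith [norm_nonneg (y - z)]
  simp only [innerSL_apply_apply, inner_sub_right] at key ⊢
  refine ⟨by nlinarith [sq_nonneg ‖y - x‖], fun h => ?_⟩
  rw [← sub_eq_zero, ← norm_eq_zero]
  nlinarith [norm_nonneg (y - x)]

theorem exists_forall_dist_lt_of_notMem [CompleteSpace E] {D : Set E} {x : E}
    (hconv : Convex ℝ D) (hcl : IsClosed D) (hbdd : Bornology.IsBounded D) (hx : x ∉ D) :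
    ∃ z, ∀ d ∈ D, dist d z < dist x z := by
  obtain ⟨l, u, hlD, hlx⟩ := geometric_hahn_banach_closed_point hconv hcl hx
  set v := (InnerProductSpace.toDual ℝ E).symm l
  have hv : ∀ y, ⟪v, y⟫ = l y := fun y => InnerProductSpace.toDual_symm_apply
  obtain ⟨M, hM, hDM⟩ := hbdd.subset_closedBall_lt 0 x
  set δ := l x - u
  have hδ : 0 < δ := sub_pos.2 hlx
  -- Moving the centre a distance `r` beyond `x` along `-v` gains `2 r δ` against the square of the
  -- distance to `x`, which beats the spread `M ^ 2` of `D` once `r = M ^ 2 / (2 δ)`.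
  set r := M ^ 2 / (2 * δ)
  have hr : 0 < r := by positivity
  refine ⟨x - r • v, fun d hd => ?_⟩
  have hdx : ‖d - x‖ ≤ M := by simpa [dist_eq_norm] using hDM hd
  have hvd : ⟪v, d - x⟫ < -δ := by
    rw [inner_sub_right, hv, hv]
    linarith [hlD d hd]
  have hsq : dist d (x - r • v) ^ 2 < dist x (x - r • v) ^ 2 := by
    have h₁ : d - (x - r • v) = (d - x) + r • v := by abel
    rw [dist_eq_norm, dist_eq_norm, h₁, sub_sub_cancel, norm_add_sq_real, real_inner_smul_right,
      real_inner_comm]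
    have h₂ : r * (2 * δ) = M ^ 2 := div_mul_cancel₀ _ (by positivity)
    nlinarith [mul_lt_mul_of_pos_left hvd hr, norm_nonneg (d - x)]
  exact lt_of_pow_lt_pow_left₀ 2 dist_nonneg hsq

end InnerProductSpace

theorem stmt7 (C : Set (EuclideanSpace ℝ (Fin n)))
    (hCcl : IsClosed C) (hCconv : Convex ℝ C) :
    Set.extremePoints ℝ C ⊆ closure (Set.exposedPoints ℝ C) := by
  intro x hx
  refine Metric.mem_closure_iff.2 fun ε hε => ?_
  set K := C ∩ closedBall x ε
  have hxK : x ∈ K := ⟨hx.1, mem_closedBall_self hε.le⟩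
  have hK : IsCompact K := (isCompact_closedBall x ε).inter_left hCcl
  set S := K \ ball x ε
  have hSK : IsCompact (convexHull ℝ S) := (hK.diff isOpen_ball).convexHull
  have hSC : S ⊆ C \ {x} := fun y hy =>
    ⟨hy.1.1, fun hyx => hy.2 (mem_singleton_iff.1 hyx ▸ mem_ball_self hε)⟩
  have hxS : x ∉ convexHull ℝ S := fun h =>
    (hCconv.mem_extremePoints_iff_mem_sdiff_convexHull_sdiff.1 hx).2 (convexHull_mono hSC h)
  obtain ⟨z, hz⟩ := exists_forall_dist_lt_of_notMem (convex_convexHull ℝ S) hSK.isClosed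
    hSK.isBounded hxS
  obtain ⟨f, hfK, hf⟩ := hK.exists_isMaxOn (s := K) ⟨x, hxK⟩
    (continuous_id.dist continuous_const : Continuous (dist · z)).continuousOn
  have hfx : f ∈ ball x ε := by
    by_contra h
    exact (hz f (subset_convexHull ℝ S ⟨hfK, h⟩)).not_ge (hf hxK)
  exact ⟨f, mem_exposedPoints_of_mem_exposedPoints_inter hCconv (closedBall_mem_nhds_of_mem hfx)
    (mem_exposedPoints_of_isMaxOn_dist hfK hf), mem_ball'.1 hfx⟩
end

section
/- Let K ⊂ ℝⁿ be a closed convex set with 0 ∈ int(K), let σ be a sublinear function with K = {x : σ(x) ≤ 1}, let x̄ ∈ bd(K) and x ∈ ℝⁿ. If x̄ − δ⁻¹x ∉ rec(K) for all δ > 0, then σ(x) ≥ sup_{δ>0} inf_{y ∈ K*} [δ(1 − ⟨x̄, y⟩) + ⟨x, y⟩]. -/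
open RealInnerProductSpace

variable {n : ℕ}

lemma polar_bdd {K : Set (EuclideanSpace ℝ (Fin n))}
    (h0 : (0 : EuclideanSpace ℝ (Fin n)) ∈ interior K) :
    ∃ R : ℝ, 0 ≤ R ∧ ∀ y ∈ polar K, ‖y‖ ≤ R := by
  obtain ⟨r, hr, hball⟩ := Metric.mem_nhds_iff.mp (mem_interior_iff_mem_nhds.mp h0)
  refine ⟨2 / r, by positivity, fun y hy => ?_⟩
  rcases eq_or_ne y 0 with rfl | hy0
  · simp; positivity
  · have hyn : (0:ℝ) < ‖y‖ := norm_pos_iff.mpr hy0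
    have hw : (r / 2) • (‖y‖⁻¹ • y) ∈ K := by
      apply hball
      rw [Metric.mem_ball, dist_zero_right, norm_smul, norm_smul, norm_inv, norm_norm,
        Real.norm_eq_abs, abs_of_pos (by positivity), inv_mul_cancel₀ hyn.ne', mul_one]
      linarith
    have := hy _ hw
    rw [real_inner_smul_left, real_inner_smul_left, real_inner_self_eq_norm_sq] at this
    have h2 : ‖y‖⁻¹ * ‖y‖ ^ 2 = ‖y‖ := by field_simp [sq]
    rw [h2] at this
    rw [le_div_iff₀ hr]
    nlinarith [this]

lemma exists_polar_gt {K : Set (EuclideanSpace ℝ (Fin n))}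
    (hKcl : IsClosed K) (hKconv : Convex ℝ K)
    (h0K : (0 : EuclideanSpace ℝ (Fin n)) ∈ K)
    (z : EuclideanSpace ℝ (Fin n)) (s : ℝ) (hs : 0 < s) (hz : s⁻¹ • z ∉ K) :
    ∃ y ∈ polar K, s < ⟪z, y⟫ := by
  obtain ⟨f, u, hfu, huf⟩ := geometric_hahn_banach_closed_point hKconv hKcl hz
  have hu : 0 < u := by have := hfu 0 h0K; simpa using this
  set v := (InnerProductSpace.toDual ℝ (EuclideanSpace ℝ (Fin n))).symm f with hv
  have hfv : ∀ a, f a = ⟪v, a⟫ := fun a =>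
    (InnerProductSpace.toDual_symm_apply (𝕜 := ℝ)).symm
  refine ⟨u⁻¹ • v, ?_, ?_⟩
  · intro a ha
    rw [inner_smul_right, real_inner_comm, ← hfv]
    rw [← div_eq_inv_mul, div_le_one hu]
    exact (hfu a ha).le
  · rw [inner_smul_right, real_inner_comm, ← hfv]
    have := huf
    rw [hfv, inner_smul_right, ← hfv] at this
    rw [lt_inv_mul_iff₀ hu]
    calc u * s < s⁻¹ * f z * s := by nlinarith
    _ = f z := by field_simp

theorem stmt19 (K : Set (EuclideanSpace ℝ (Fin n)))
    (hKcl : IsClosed K) (hKconv : Convex ℝ K) (h0 : (0 : EuclideanSpace ℝ (Fin n)) ∈ interior K)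
    (σ : EuclideanSpace ℝ (Fin n) → ℝ) (hσ : IsSublinear σ)
    (hKσ : K = {x | σ x ≤ 1})
    (xbar : EuclideanSpace ℝ (Fin n)) (hxbarK : xbar ∈ K) (hxbar : σ xbar = 1)
    (x : EuclideanSpace ℝ (Fin n))
    (hrec : ∀ δ : ℝ, 0 < δ → xbar - δ⁻¹ • x ∉ recCone K) :
    sSup ((fun δ => sInf ((fun y => δ * (1 - ⟪xbar, y⟫) + ⟪x, y⟫) '' polar K)) ''
        Set.Ioi (0 : ℝ)) ≤ σ x := by
  obtain ⟨hconv, hhom⟩ := hσ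
  have h0K : (0 : EuclideanSpace ℝ (Fin n)) ∈ K := interior_subset h0
  have hadd : ∀ a b, σ (a + b) ≤ σ a + σ b := by
    intro a b
    have h := hconv.2 (Set.mem_univ a) (Set.mem_univ b)
      (by norm_num : (0:ℝ) ≤ (1:ℝ)/2) (by norm_num : (0:ℝ) ≤ (1:ℝ)/2) (by norm_num)
    have h2 : σ (a + b) = 2 * σ (((1:ℝ)/2) • a + ((1:ℝ)/2) • b) := by
      rw [← hhom 2 (by norm_num)]
      congr 1
      module
    rw [h2]; rw [smul_eq_mul, smul_eq_mul] at h; linarith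
  obtain ⟨R, hR0, hRb⟩ := polar_bdd h0
  apply csSup_le (Set.Nonempty.image _ ⟨1, Set.mem_Ioi.mpr one_pos⟩)
  rintro v ⟨δ, hδ, rfl⟩
  rw [Set.mem_Ioi] at hδ
  set z := xbar - δ⁻¹ • x with hz
  have hzpos : 0 < σ z := by
    by_contra h
    push_neg at h
    refine hrec δ hδ ⟨?_, fun t ht => ?_⟩
    · rw [hKσ]; exact le_trans h (by norm_num)
    · rw [hKσ]
      show σ (t • z) ≤ 1
      rw [hhom t ht]
      nlinarith
  have hkey : δ * (1 - σ z) ≤ σ x := by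
    have h1 : δ • xbar = δ • z + x := by
      rw [hz, smul_sub, smul_smul, mul_inv_cancel₀ hδ.ne', one_smul]
      abel
    have h2 := hadd (δ • z) x
    rw [← h1, hhom δ hδ xbar, hhom δ hδ z, hxbar, mul_one] at h2
    nlinarith
  -- inner products with z
  have hinner : ∀ y : EuclideanSpace ℝ (Fin n),
      δ * (1 - ⟪xbar, y⟫) + ⟪x, y⟫ = δ * (1 - ⟪z, y⟫) := by
    intro y
    rw [hz, inner_sub_left, real_inner_smul_left]
    field_simp
    ring
  have hbdd : BddBelow ((fun y => δ * (1 - ⟪xbar, y⟫) + ⟪x, y⟫) '' polar K) := by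
    refine ⟨δ * (1 - ‖z‖ * R), ?_⟩
    rintro w ⟨y, hy, rfl⟩
    dsimp only
    rw [hinner y]
    have h1 : ⟪z, y⟫ ≤ ‖z‖ * ‖y‖ := real_inner_le_norm z y
    have h2 : ‖z‖ * ‖y‖ ≤ ‖z‖ * R := by
      have := hRb y hy
      nlinarith [norm_nonneg z]
    nlinarith
  refine le_of_forall_pos_le_add fun ε hε => ?_
  set s := σ z - min (ε / δ) (σ z / 2) with hs
  have hs0 : 0 < s := by
    have : min (ε / δ) (σ z / 2) ≤ σ z / 2 := min_le_right _ _
    rw [hs]; linarith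
  have hsz : s < σ z := by
    have : 0 < min (ε / δ) (σ z / 2) := lt_min (by positivity) (by linarith)
    rw [hs]; linarith
  have hnotK : s⁻¹ • z ∉ K := by
    rw [hKσ]
    intro hmem
    have : σ (s⁻¹ • z) = s⁻¹ * σ z := hhom s⁻¹ (by positivity) z
    rw [Set.mem_setOf_eq, this] at hmem
    rw [inv_mul_le_iff₀ hs0, mul_one] at hmem
    linarith
  obtain ⟨y, hyP, hyz⟩ := exists_polar_gt hKcl hKconv h0K z s hs0 hnotK
  have hval : δ * (1 - ⟪xbar, y⟫) + ⟪x, y⟫ ≤ σ x + ε := by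
    rw [hinner y]
    have h1 : δ * (1 - ⟪z, y⟫) ≤ δ * (1 - s) := by nlinarith
    have h2 : δ * (1 - s) ≤ σ x + ε := by
      have h3 : min (ε / δ) (σ z / 2) ≤ ε / δ := min_le_left _ _
      have h4 : δ * min (ε / δ) (σ z / 2) ≤ ε := by
        rw [← le_div_iff₀' hδ]; exact h3
      rw [hs]
      nlinarith
    linarith
  exact le_trans (csInf_le hbdd ⟨y, hyP, rfl⟩) hval
end
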